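/- arXiv:1409.6020 — 3 statements merged into one kernel-verified Lean document; each statement's English description precedes it below -/
import Mathlib

section
/- Let γ be the 6×6 complex matrix with entries γ₁₃ = γ₂₄ = γ₃₅ = γ₄₆ = γ₆₁ = 1, γ₅₂ = −1, and all other entries 0. For all complex numbers u₁, u₂, u₃ of absolute value 1, the characteristic polynomial of D(u₁,u₂,u₃)·γ² equals X⁶ + (u₁ū₂u₃ + ū₁u₂ū₃)X³ + 1, where D(u₁,u₂,u₃) = diag(u₁, ū₁, u₂, ū₂, u₃, ū₃). -/
/-!
γ² is a signed permutation matrix whose permutation is the product of the two 3-cycles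
(1 5 4)(2 6 3), so D·γ² is one too. Listing the indices cycle by cycle makes it block diagonal
with two weighted 3-cycles, and a weighted 3-cycle with weights a, b, c has characteristic
polynomial X³ − abc. Hence the characteristic polynomial is (X³ + p)(X³ + q) with
p = u₁ū₂u₃, q = ū₁u₂ū₃, and pq = |u₁|²|u₂|²|u₃|² = 1.
-/

open Matrix Polynomial

section SignedPermutation

variable {R : Type*} [CommRing R]

theorem charpoly_cycle_three (a b c : R) :
    (!![0, a, 0; 0, 0, b; c, 0, 0] : Matrix (Fin 3) (Fin 3) R).charpoly
      = X ^ 3 - C (a * b * c) := by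
  simp [charpoly, det_fin_three]
  ring

def gammaMatrix : Matrix (Fin 6) (Fin 6) R :=
  !![0, 0, 1, 0, 0, 0;
     0, 0, 0, 1, 0, 0;
     0, 0, 0, 0, 1, 0;
     0, 0, 0, 0, 0, 1;
     0, -1, 0, 0, 0, 0;
     1, 0, 0, 0, 0, 0]

theorem gammaMatrix_sq : (gammaMatrix : Matrix (Fin 6) (Fin 6) R) ^ 2 =
    !![0, 0, 0, 0, 1, 0;
       0, 0, 0, 0, 0, 1;
       0, -1, 0, 0, 0, 0;
       1, 0, 0, 0, 0, 0;
       0, 0, 0, -1, 0, 0;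
       0, 0, 1, 0, 0, 0] := by
  ext i j
  fin_cases i <;> fin_cases j <;> simp [gammaMatrix, sq, mul_apply, Fin.sum_univ_succ]

/-- The cycles `0 → 4 → 3 → 0` and `1 → 5 → 2 → 1` of the permutation underlying `γ²`
(indices from `0`). -/
def gammaSqCycleEquiv : Fin 3 ⊕ Fin 3 ≃ Fin 6 where
  toFun := Sum.elim ![0, 4, 3] ![1, 5, 2]
  invFun := ![.inl 0, .inr 0, .inr 2, .inl 2, .inl 1, .inr 1]
  left_inv := by decide
  right_inv := by decide

theorem charpoly_diagonal_mul_gammaMatrix_sq (d : Fin 6 → R) :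
    (diagonal d * gammaMatrix ^ 2).charpoly
      = (X ^ 3 + C (d 0 * d 3 * d 4)) * (X ^ 3 + C (d 1 * d 2 * d 5)) := by
  have hblocks :
      (diagonal d * gammaMatrix ^ 2).submatrix gammaSqCycleEquiv gammaSqCycleEquiv
        = fromBlocks !![0, d 0, 0; 0, 0, -d 4; d 3, 0, 0] 0 0
            !![0, d 1, 0; 0, 0, d 5; -d 2, 0, 0] := by
    ext (i | i) (j | j) <;> fin_cases i <;> fin_cases j <;>
      simp [gammaMatrix_sq, gammaSqCycleEquiv]
  rw [← charpoly_reindex gammaSqCycleEquiv.symm, reindex_apply, Equiv.symm_symm, hblocks,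
    charpoly_fromBlocks_zero₁₂, charpoly_cycle_three, charpoly_cycle_three]
  simp only [map_neg, mul_neg, neg_mul, sub_neg_eq_add, mul_right_comm (d 0),
    mul_right_comm (d 1)]

end SignedPermutation

theorem Complex.mul_conj_eq_one_of_norm_eq_one {z : ℂ} (hz : ‖z‖ = 1) :
    z * starRingEnd ℂ z = 1 := by
  rw [Complex.mul_conj', hz]
  norm_num

/-- For `u₁, u₂, u₃` on the unit circle, the characteristic polynomial of
`D(u₁,u₂,u₃)·γ²` is `X⁶ + (u₁ū₂u₃ + ū₁u₂ū₃)X³ + 1`. -/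
theorem charpoly_component_two (u₁ u₂ u₃ : ℂ)
    (h₁ : ‖u₁‖ = 1) (h₂ : ‖u₂‖ = 1) (h₃ : ‖u₃‖ = 1) :
    let γ : Matrix (Fin 6) (Fin 6) ℂ :=
      !![0, 0, 1, 0, 0, 0;
         0, 0, 0, 1, 0, 0;
         0, 0, 0, 0, 1, 0;
         0, 0, 0, 0, 0, 1;
         0, -1, 0, 0, 0, 0;
         1, 0, 0, 0, 0, 0]
    let D : Matrix (Fin 6) (Fin 6) ℂ :=
      Matrix.diagonal ![u₁, starRingEnd ℂ u₁, u₂, starRingEnd ℂ u₂, u₃, starRingEnd ℂ u₃]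
    (D * γ ^ 2).charpoly
      = X ^ 6
        + C (u₁ * starRingEnd ℂ u₂ * u₃ + starRingEnd ℂ u₁ * u₂ * starRingEnd ℂ u₃) * X ^ 3
        + 1 := by
  intro γ D
  have hweights : (u₁ * starRingEnd ℂ u₂ * u₃) * (starRingEnd ℂ u₁ * u₂ * starRingEnd ℂ u₃) = 1 := by
    calc _ = (u₁ * starRingEnd ℂ u₁) * (u₂ * starRingEnd ℂ u₂) * (u₃ * starRingEnd ℂ u₃) := by ring
      _ = 1 := by simp only [Complex.mul_conj_eq_one_of_norm_eq_one, h₁, h₂, h₃, mul_one]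
  change (diagonal _ * (gammaMatrix : Matrix (Fin 6) (Fin 6) ℂ) ^ 2).charpoly = _
  rw [charpoly_diagonal_mul_gammaMatrix_sq]
  have hconst : C (u₁ * starRingEnd ℂ u₂ * u₃) * C (starRingEnd ℂ u₁ * u₂ * starRingEnd ℂ u₃)
      = (1 : ℂ[X]) := by
    rw [← C_mul, hweights, C_1]
  simp only [cons_val, C_add]
  linear_combination hconst
end

section
/- Let K = ℚ(ζ) be the 9th cyclotomic field where ζ is a primitive 9th root of unity, let 𝒪 be its ring of integers, and let 𝔪 be the ideal of 𝒪 generated by (1 + ζ + ζ⁴)⁴. Set ε₀ = −ζ², ε₁ = ζ⁴ − ζ³ + ζ, ε₂ = ζ⁵ + ζ² − ζ, and let σ₁, σ₅, σ₇ be the ℚ-automorphisms of K determined by σᵢ(ζ) = ζ^i. If integers a, b, c satisfy ε₀^a ε₁^b ε₂^c ≡ 1 (mod 𝔪), then, writing u = ε₀^a ε₁^b ε₂^c, one has σ₁(u) · σ₅(u) · σ₇(u) = 1. -/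
/-!
The reflex norm `N(u) = σ₁(u) σ₅(u) σ₇(u)` is multiplicative and takes the values `-ζ⁸`, `ζ²`, `1`
on `ε₀, ε₁, ε₂`, so `N(u)` is an 18th root of unity. As `λ = ζ - 1` divides `1 + ζ + ζ⁴` and is an
associate of each of its conjugates, `u ≡ 1 mod 𝔪` gives `N(u) ≡ 1 mod λ⁴`. Now `(3) = (λ)⁶` with
`λ` prime, so `λ ∤ 2` rules out `-1 ≡ 1`, and a primitive cube root of unity `ω ≡ 1 mod λ⁴` would
give `λ⁸ ∣ (ω - 1)² = -3ω`. An 18th root of unity other than `1` has `-1` or such an `ω` among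
its powers, hence `N(u) = 1`.
-/

open NumberField

section Congruence

variable {R : Type*} [CommRing R] {m x y : R}

theorem dvd_mul_sub_one_of_dvd_sub_one (hx : m ∣ x - 1) (hy : m ∣ y - 1) : m ∣ x * y - 1 := by
  have h : x * y - 1 = x * (y - 1) + (x - 1) := by ring
  rw [h]
  exact dvd_add (dvd_mul_of_dvd_right hy x) hx

theorem dvd_pow_sub_one_of_dvd_sub_one (hx : m ∣ x - 1) (n : ℕ) : m ∣ x ^ n - 1 :=
  hx.trans (sub_one_dvd_pow_sub_one x n)

theorem pow_dvd_map_sub_one_of_pow_dvd_sub_one {F : Type*} [FunLike F R R] [RingHomClass F R R]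
    (τ : F) {π : R} (hπ : π ∣ τ π) {n : ℕ} (hx : π ^ n ∣ x - 1) : π ^ n ∣ τ x - 1 := by
  have h := map_dvd τ hx
  rw [map_pow, map_sub, map_one] at h
  exact (pow_dvd_pow_of_dvd hπ n).trans h

theorem eq_one_of_sq_eq_one_of_dvd_sub_one [NoZeroDivisors R] (h2 : ¬ m ∣ 2) (hx : x ^ 2 = 1)
    (hm : m ∣ x - 1) : x = 1 := by
  refine (mul_self_eq_one_iff.mp (by rwa [← sq])).resolve_right fun hx₁ ↦ h2 ?_
  rw [hx₁, show (-1 : R) - 1 = -2 by ring, dvd_neg] at hm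
  exact hm

theorem eq_one_of_pow_three_eq_one_of_dvd_sub_one [NoZeroDivisors R] (h3 : ¬ m ^ 2 ∣ 3)
    (hx : x ^ 3 = 1) (hm : m ∣ x - 1) : x = 1 := by
  by_contra hx₁
  have hx₂ : x ^ 2 + x + 1 = 0 := by
    have h : (x - 1) * (x ^ 2 + x + 1) = 0 := by linear_combination hx
    exact (mul_eq_zero.mp h).resolve_left (sub_ne_zero.mpr hx₁)
  -- `(x - 1)² = -3x`
  have h3x : (3 : R) = -((x - 1) ^ 2 * x ^ 2) := by
    linear_combination hx₂ + (x - 2) * hx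
  exact h3 (h3x ▸ (dvd_neg.mpr (dvd_mul_of_dvd_left (pow_dvd_pow_of_dvd hm 2) _)))

theorem eq_one_of_pow_eighteen_eq_one_of_dvd_sub_one [NoZeroDivisors R] (h2 : ¬ m ∣ 2)
    (h3 : ¬ m ^ 2 ∣ 3) (hx : x ^ 18 = 1) (hm : m ∣ x - 1) : x = 1 := by
  have hx₉ : x ^ 9 = 1 := eq_one_of_sq_eq_one_of_dvd_sub_one h2 (by rw [← pow_mul, hx])
    (dvd_pow_sub_one_of_dvd_sub_one hm 9)
  have hx₃ : x ^ 3 = 1 := eq_one_of_pow_three_eq_one_of_dvd_sub_one h3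
    (by rw [← pow_mul, hx₉]) (dvd_pow_sub_one_of_dvd_sub_one hm 3)
  exact eq_one_of_pow_three_eq_one_of_dvd_sub_one h3 hx₃ hm

end Congruence

section ReflexNorm

variable {R F : Type*}

/-- For `τᵢ` the automorphisms of the reflex type `Φ* = {σ₁, σ₅, σ₇}`, this is its type norm. -/
def reflexNorm [CommMonoid R] [FunLike F R R] [MonoidHomClass F R R] (τ₁ τ₂ τ₃ : F) :
    Rˣ →* Rˣ :=
  Units.map (τ₁ : R →* R) * Units.map (τ₂ : R →* R) * Units.map (τ₃ : R →* R)

theorem coe_reflexNorm [CommMonoid R] [FunLike F R R] [MonoidHomClass F R R] (τ₁ τ₂ τ₃ : F)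
    (u : Rˣ) : (reflexNorm τ₁ τ₂ τ₃ u : R) = τ₁ u * τ₂ u * τ₃ u :=
  rfl

variable [CommRing R] [FunLike F R R] [RingHomClass F R R]

theorem pow_dvd_reflexNorm_sub_one {τ₁ τ₂ τ₃ : F} {π : R} (h₁ : π ∣ τ₁ π) (h₂ : π ∣ τ₂ π)
    (h₃ : π ∣ τ₃ π) {n : ℕ} {u : Rˣ} (hu : π ^ n ∣ u - 1) :
    π ^ n ∣ (reflexNorm τ₁ τ₂ τ₃ u : R) - 1 := by
  rw [coe_reflexNorm]
  exact dvd_mul_sub_one_of_dvd_sub_one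
    (dvd_mul_sub_one_of_dvd_sub_one (pow_dvd_map_sub_one_of_pow_dvd_sub_one τ₁ h₁ hu)
      (pow_dvd_map_sub_one_of_pow_dvd_sub_one τ₂ h₂ hu))
    (pow_dvd_map_sub_one_of_pow_dvd_sub_one τ₃ h₃ hu)

theorem reflexNorm_mem_rootsOfUnity_eighteen {ζ : R} (hζ : ζ ^ 6 + ζ ^ 3 + 1 = 0)
    {τ₁ τ₅ τ₇ : F} (h₁ : τ₁ ζ = ζ ^ 1) (h₅ : τ₅ ζ = ζ ^ 5) (h₇ : τ₇ ζ = ζ ^ 7)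
    {ε₀ ε₁ ε₂ : Rˣ} (hε₀ : (ε₀ : R) = -ζ ^ 2) (hε₁ : (ε₁ : R) = ζ ^ 4 - ζ ^ 3 + ζ)
    (hε₂ : (ε₂ : R) = ζ ^ 5 + ζ ^ 2 - ζ) (a b c : ℤ) :
    reflexNorm τ₁ τ₅ τ₇ (ε₀ ^ a * ε₁ ^ b * ε₂ ^ c) ∈ rootsOfUnity 18 R := by
  have hζ₉ : ζ ^ 9 = 1 := by linear_combination (ζ ^ 3 - 1) * hζ
  have mem_of_coe {u : Rˣ} (hu : (u : R) ^ 18 = 1) : u ∈ rootsOfUnity 18 R := by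
    rw [mem_rootsOfUnity, Units.ext_iff, Units.val_pow_eq_pow_val, Units.val_one, hu]
  have hN₀ : (reflexNorm τ₁ τ₅ τ₇ ε₀ : R) = -ζ ^ 8 := by
    simp only [coe_reflexNorm, hε₀, map_neg, map_pow, h₁, h₅, h₇]
    grind
  have hN₁ : (reflexNorm τ₁ τ₅ τ₇ ε₁ : R) = ζ ^ 2 := by
    simp only [coe_reflexNorm, hε₁, map_add, map_sub, map_pow, h₁, h₅, h₇]
    grind
  have hN₂ : (reflexNorm τ₁ τ₅ τ₇ ε₂ : R) = 1 := by
    simp only [coe_reflexNorm, hε₂, map_add, map_sub, map_pow, h₁, h₅, h₇]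
    grind
  rw [map_mul, map_mul, map_zpow, map_zpow, map_zpow]
  refine mul_mem (mul_mem (zpow_mem (mem_of_coe ?_) a) (zpow_mem (mem_of_coe ?_) b))
    (zpow_mem (mem_of_coe ?_) c)
  · rw [hN₀, show (-ζ ^ 8) ^ 18 = (ζ ^ 9) ^ 16 by ring, hζ₉, one_pow]
  · rw [hN₁, ← pow_mul, show 2 * 18 = 9 * 4 by rfl, pow_mul, hζ₉, one_pow]
  · rw [hN₂, one_pow]

end ReflexNorm

namespace IsPrimitiveRoot

theorem pow_six_add_pow_three_add_one {R : Type*} [CommRing R] [NoZeroDivisors R] {ζ : R}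
    (hζ : IsPrimitiveRoot ζ 9) : ζ ^ 6 + ζ ^ 3 + 1 = 0 := by
  have h : (ζ ^ 3 - 1) * (ζ ^ 6 + ζ ^ 3 + 1) = 0 := by linear_combination hζ.pow_eq_one
  exact (mul_eq_zero.mp h).resolve_left
    (sub_ne_zero.mpr (hζ.pow_ne_one_of_pos_of_lt (by norm_num) (by norm_num)))

variable {K : Type*} [Field K] [NumberField K] {ζ : 𝓞 K}

section PrimePow

variable {p k : ℕ} [Fact p.Prime] [IsCyclotomicExtension {p ^ (k + 1)} ℚ K]

theorem prime_sub_one (hζ : IsPrimitiveRoot ζ (p ^ (k + 1))) : Prime (ζ - 1) :=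
  (hζ.map_of_injective RingOfIntegers.coe_injective).zeta_sub_one_prime

theorem associated_natCast_sub_one_pow (hζ : IsPrimitiveRoot ζ (p ^ (k + 1))) :
    Associated (p : 𝓞 K) ((ζ - 1) ^ (p ^ k * (p - 1))) := by
  have h := IsCyclotomicExtension.Rat.map_eq_span_zeta_sub_one_pow p k
    (hζ.map_of_injective RingOfIntegers.coe_injective)
  rw [IsCyclotomicExtension.Rat.finrank (p ^ (k + 1)), Nat.totient_prime_pow_succ Fact.out,
    Ideal.map_span, Set.image_singleton, Ideal.span_singleton_pow] at h
  exact Ideal.span_singleton_eq_span_singleton.mp (by simpa using h)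

end PrimePow

variable [IsCyclotomicExtension {9} ℚ K]

theorem associated_three_sub_one_pow_six (hζ : IsPrimitiveRoot ζ 9) :
    Associated (3 : 𝓞 K) ((ζ - 1) ^ 6) := by
  simpa using hζ.associated_natCast_sub_one_pow (p := 3) (k := 1)

theorem sub_one_dvd_three (hζ : IsPrimitiveRoot ζ 9) : ζ - 1 ∣ 3 :=
  (dvd_pow_self _ (by norm_num)).trans hζ.associated_three_sub_one_pow_six.symm.dvd

theorem sub_one_dvd_one_add_self_add_pow_four (hζ : IsPrimitiveRoot ζ 9) :
    ζ - 1 ∣ 1 + ζ + ζ ^ 4 := by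
  have h : 1 + ζ + ζ ^ 4 = 3 + (ζ - 1) + (ζ ^ 4 - 1) := by ring
  rw [h]
  exact dvd_add (dvd_add hζ.sub_one_dvd_three dvd_rfl) (sub_one_dvd_pow_sub_one ζ 4)

theorem eq_one_of_pow_eighteen_eq_one_of_sub_one_pow_four_dvd (hζ : IsPrimitiveRoot ζ 9)
    {η : 𝓞 K} (hη : η ^ 18 = 1) (h : (ζ - 1) ^ 4 ∣ η - 1) : η = 1 := by
  have hπ : Prime (ζ - 1) := hζ.prime_sub_one (p := 3) (k := 1)
  refine eq_one_of_pow_eighteen_eq_one_of_dvd_sub_one (fun h₂ ↦ ?_) (fun h₈ ↦ ?_) hη h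
  · refine hπ.not_isUnit (isUnit_of_dvd_one ?_)
    have h₁ := dvd_sub hζ.sub_one_dvd_three ((dvd_pow_self _ four_ne_zero).trans h₂)
    rwa [show (3 : 𝓞 K) - 2 = 1 by norm_num] at h₁
  · rw [← pow_mul] at h₈
    have h₆ := h₈.trans hζ.associated_three_sub_one_pow_six.dvd
    rw [pow_dvd_pow_iff hπ.ne_zero hπ.not_isUnit] at h₆
    norm_num at h₆

end IsPrimitiveRoot

/-- In the 9th cyclotomic field `K = ℚ(ζ)` with ring of integers `𝒪` and
`𝔪 = ((1 + ζ + ζ⁴)⁴)`, if `u = ε₀^a ε₁^b ε₂^c ≡ 1 (mod 𝔪)` then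
`σ₁(u)·σ₅(u)·σ₇(u) = 1`, where `σᵢ(ζ) = ζ^i`. -/
theorem reflex_norm_of_unit_congruent_one
    (K : Type*) [Field K] [NumberField K] [IsCyclotomicExtension {9} ℚ K]
    (ζ : 𝓞 K) (hζ : IsPrimitiveRoot ζ 9)
    (ε₀ ε₁ ε₂ : (𝓞 K)ˣ)
    (hε₀ : (ε₀ : 𝓞 K) = -ζ ^ 2)
    (hε₁ : (ε₁ : 𝓞 K) = ζ ^ 4 - ζ ^ 3 + ζ)
    (hε₂ : (ε₂ : 𝓞 K) = ζ ^ 5 + ζ ^ 2 - ζ)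
    (σ₁ σ₅ σ₇ : K ≃ₐ[ℚ] K)
    (hσ₁ : σ₁ ((ζ : 𝓞 K) : K) = ((ζ : 𝓞 K) : K) ^ 1)
    (hσ₅ : σ₅ ((ζ : 𝓞 K) : K) = ((ζ : 𝓞 K) : K) ^ 5)
    (hσ₇ : σ₇ ((ζ : 𝓞 K) : K) = ((ζ : 𝓞 K) : K) ^ 7)
    (a b c : ℤ)
    (h : ((ε₀ ^ a * ε₁ ^ b * ε₂ ^ c : (𝓞 K)ˣ) : 𝓞 K) - 1
      ∈ Ideal.span {(1 + ζ + ζ ^ 4) ^ 4}) :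
    σ₁ (((ε₀ ^ a * ε₁ ^ b * ε₂ ^ c : (𝓞 K)ˣ) : 𝓞 K) : K)
      * σ₅ (((ε₀ ^ a * ε₁ ^ b * ε₂ ^ c : (𝓞 K)ˣ) : 𝓞 K) : K)
      * σ₇ (((ε₀ ^ a * ε₁ ^ b * ε₂ ^ c : (𝓞 K)ˣ) : 𝓞 K) : K) = 1 := by
  set u := ε₀ ^ a * ε₁ ^ b * ε₂ ^ c
  set N := reflexNorm (RingOfIntegers.mapAlgEquiv σ₁) (RingOfIntegers.mapAlgEquiv σ₅)
    (RingOfIntegers.mapAlgEquiv σ₇)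
  have hroot : N u ∈ rootsOfUnity 18 (𝓞 K) :=
    reflexNorm_mem_rootsOfUnity_eighteen hζ.pow_six_add_pow_three_add_one
      (RingOfIntegers.ext hσ₁) (RingOfIntegers.ext hσ₅) (RingOfIntegers.ext hσ₇) hε₀ hε₁ hε₂ a b c
  have hcong : (ζ - 1) ^ 4 ∣ (N u : 𝓞 K) - 1 :=
    pow_dvd_reflexNorm_sub_one (hζ.associated_sub_one_map_sub_one _).dvd
      (hζ.associated_sub_one_map_sub_one _).dvd (hζ.associated_sub_one_map_sub_one _).dvd
      ((pow_dvd_pow_of_dvd hζ.sub_one_dvd_one_add_self_add_pow_four 4).trans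
        (Ideal.mem_span_singleton.mp h))
  have hN : N u = 1 := Units.ext <|
    hζ.eq_one_of_pow_eighteen_eq_one_of_sub_one_pow_four_dvd
      (by rw [← Units.val_pow_eq_pow_val, (mem_rootsOfUnity _ _).mp hroot, Units.val_one]) hcong
  exact congrArg (fun v : (𝓞 K)ˣ ↦ ((v : 𝓞 K) : K)) hN
end

section
/- Let μ be the Haar probability measure on the 3-torus U(1)³, and for u = (u₁,u₂,u₃) ∈ U(1)³ write αᵢ = uᵢ + ūᵢ = 2 Re uᵢ. Define M(k) = binom(k, k/2) if k is even and M(k) = 0 if k is odd. Then for every natural number n, ∫_{U(1)³} (2α₁ + 2α₂ + 2α₃ + α₁α₂α₃)ⁿ dμ = Σ_{a+b+c+d=n} (n! / (a! b! c! d!)) · 2^{a+b+c} · M(a+d) · M(b+d) · M(c+d). In particular the values for n = 0,…,6 are 1, 0, 32, 0, 4920, 0, 1109120. -/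
/-!
Expanding `a₃ⁿ = (2α₁ + 2α₂ + 2α₃ + α₁α₂α₃)ⁿ` by the multinomial theorem reduces the moment to
the integrals of `α₁ᵖ α₂^q α₃ʳ`. Since `αᵢ = uᵢ + uᵢ⁻¹`, the binomial theorem writes such a product
as a combination of the characters `u ↦ u₁ʲ u₂ᵏ u₃ˡ` of the torus. Translating by a point where a
character `χ` is not `1` multiplies `∫ χ dμ` by that value, so every nontrivial character integrates
to zero and only the constant term survives; for `(u + u⁻¹)ᵖ` it is `M(p)`. The listed values are
then a finite computation.
-/

open MeasureTheory Finset

theorem MeasureTheory.integral_monoidHom_eq_zero {G 𝕜 : Type*} [Group G] [MeasurableSpace G]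
    [MeasurableMul G] [RCLike 𝕜] (μ : Measure G) [μ.IsMulLeftInvariant] (χ : G →* 𝕜) {g : G}
    (hg : χ g ≠ 1) : ∫ x, χ x ∂μ = 0 := by
  have h : χ g * ∫ x, χ x ∂μ = ∫ x, χ x ∂μ :=
    calc χ g * ∫ x, χ x ∂μ = ∫ x, χ (g * x) ∂μ := by simp only [map_mul, integral_const_mul]
      _ = ∫ x, χ x ∂μ := integral_mul_left_eq_self _ g
  exact (mul_left_eq_self₀.mp h).resolve_left hg

theorem Finset.sum_mul_sum_mul_sum {ι κ ν R : Type*} [CommSemiring R] (s : Finset ι)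
    (t : Finset κ) (v : Finset ν) (f : ι → R) (g : κ → R) (h : ν → R) :
    (∑ i ∈ s, f i) * (∑ j ∈ t, g j) * (∑ k ∈ v, h k)
      = ∑ x ∈ s ×ˢ t ×ˢ v, f x.1 * g x.2.1 * h x.2.2 := by
  rw [sum_mul_sum, sum_mul, sum_product]
  exact sum_congr rfl fun i _ => by rw [sum_mul_sum, sum_product]

theorem Finset.sum_piAntidiag_univ_fin_four {M : Type*} [AddCommMonoid M] (n : ℕ)
    (F : (Fin 4 → ℕ) → M) :
    ∑ k ∈ piAntidiag univ n, F k
      = ∑ a ∈ range (n + 1), ∑ b ∈ range (n + 1), ∑ c ∈ range (n + 1), ∑ d ∈ range (n + 1),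
          if a + b + c + d = n then F ![a, b, c, d] else 0 := by
  have hvec (k : Fin 4 → ℕ) : ![k 0, k 1, k 2, k 3] = k := by
    ext i; fin_cases i <;> rfl
  calc ∑ k ∈ piAntidiag univ n, F k
      = ∑ x ∈ (range (n + 1) ×ˢ range (n + 1) ×ˢ range (n + 1) ×ˢ range (n + 1)).filter
            (fun x => x.1 + x.2.1 + x.2.2.1 + x.2.2.2 = n), F ![x.1, x.2.1, x.2.2.1, x.2.2.2] := by
        refine sum_nbij' (fun k => (k 0, k 1, k 2, k 3)) (fun x => ![x.1, x.2.1, x.2.2.1, x.2.2.2])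
          ?_ ?_ (fun k _ => hvec k) (fun x _ => rfl) (fun k _ => by rw [hvec])
        · intro k hk
          simp only [mem_piAntidiag, Fin.sum_univ_four, mem_filter, mem_product, mem_range] at hk ⊢
          omega
        · intro x hx
          simp only [mem_piAntidiag, Fin.sum_univ_four, mem_filter, mem_product, mem_range] at hx ⊢
          simp [hx.2]
    _ = _ := by simp only [sum_filter, sum_product]

theorem Nat.cast_multinomial_univ_four {K : Type*} [Field K] [CharZero K] (a b c d : ℕ) :
    (Nat.multinomial univ ![a, b, c, d] : K)
      = (a + b + c + d).factorial / (a.factorial * b.factorial * c.factorial * d.factorial) := by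
  have h := Nat.multinomial_spec univ ![a, b, c, d]
  simp only [Fin.prod_univ_four, Fin.sum_univ_four, Matrix.cons_val] at h
  rw [eq_div_iff (by norm_cast; positivity)]
  exact_mod_cast (mul_comm _ _).trans h

theorem add_inv_pow_eq_sum_zpow {K : Type*} [Field K] {x : K} (hx : x ≠ 0) (p : ℕ) :
    (x + x⁻¹) ^ p = ∑ i ∈ range (p + 1), (p.choose i : K) * x ^ (2 * (i : ℤ) - p) := by
  rw [add_pow]
  refine sum_congr rfl fun i hi => ?_
  have hip : i ≤ p := Nat.lt_succ_iff.mp (mem_range.mp hi)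
  rw [show 2 * (i : ℤ) - p = i + -((p - i : ℕ) : ℤ) by push_cast [hip]; ring,
    zpow_add₀ hx, zpow_neg, zpow_natCast, zpow_natCast, inv_pow]
  ring

/-- The paper's `M k`, the `k`-th moment of `u + ū` on `U(1)`. -/
def circleTraceMoment (k : ℕ) : ℕ := if Even k then k.choose (k / 2) else 0

theorem sum_choose_mul_ite_eq_circleTraceMoment {R : Type*} [Semiring R] (p : ℕ) :
    ∑ i ∈ range (p + 1), (p.choose i : R) * (if 2 * (i : ℤ) - p = 0 then 1 else 0)
      = circleTraceMoment p := by
  rw [circleTraceMoment]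
  split_ifs with hp
  · obtain ⟨m, rfl⟩ := hp
    rw [sum_eq_single_of_mem m (by simp only [mem_range]; omega)
      fun i _ hi => by rw [if_neg (by omega), mul_zero]]
    rw [if_pos (by push_cast; ring), mul_one, show (m + m) / 2 = m by omega]
  · rw [Nat.cast_zero]
    exact sum_eq_zero fun i _ => by rw [if_neg fun h => hp ⟨i, by omega⟩, mul_zero]

/-- Valued in `ℕ` so that the kernel can evaluate it by `decide`. -/
noncomputable def thirdTraceMoment (n : ℕ) : ℕ :=
  ∑ k ∈ piAntidiag (univ : Finset (Fin 4)) n, Nat.multinomial univ k * 2 ^ (k 0 + k 1 + k 2)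
    * circleTraceMoment (k 0 + k 3) * circleTraceMoment (k 1 + k 3) * circleTraceMoment (k 2 + k 3)

theorem thirdTrace_pow_eq_sum {R : Type*} [CommSemiring R] (x y z : R) (n : ℕ) :
    (2 * x + 2 * y + 2 * z + x * y * z) ^ n
      = ∑ k ∈ piAntidiag (univ : Finset (Fin 4)) n, (Nat.multinomial univ k : R)
          * (2 ^ (k 0 + k 1 + k 2) * (x ^ (k 0 + k 3) * y ^ (k 1 + k 3) * z ^ (k 2 + k 3))) := by
  have h := sum_pow_eq_sum_piAntidiag univ ![2 * x, 2 * y, 2 * z, x * y * z] n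
  simp only [Fin.sum_univ_four, Fin.prod_univ_four, Matrix.cons_val] at h
  rw [h]
  refine sum_congr rfl fun k _ => ?_
  ring

theorem cast_thirdTraceMoment (n : ℕ) :
    (thirdTraceMoment n : ℝ)
      = ∑ a ∈ range (n + 1), ∑ b ∈ range (n + 1), ∑ c ∈ range (n + 1), ∑ d ∈ range (n + 1),
          if a + b + c + d = n then
            (n.factorial : ℝ) / ((a.factorial : ℝ) * b.factorial * c.factorial * d.factorial)
              * 2 ^ (a + b + c) * circleTraceMoment (a + d) * circleTraceMoment (b + d)
              * circleTraceMoment (c + d)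
          else 0 := by
  rw [thirdTraceMoment, Nat.cast_sum, sum_piAntidiag_univ_fin_four]
  refine sum_congr rfl fun a _ => sum_congr rfl fun b _ => sum_congr rfl fun c _ =>
    sum_congr rfl fun d _ => ?_
  split_ifs with h
  · subst h
    simp [Nat.cast_multinomial_univ_four]
  · rfl

theorem Circle.exists_zpow_ne_one {j : ℤ} (hj : j ≠ 0) : ∃ z : Circle, z ^ j ≠ 1 :=
  ⟨Circle.exp (Real.pi / j), by
    rw [← Circle.exp_intCast_mul, mul_div_cancel₀ _ (Int.cast_ne_zero.mpr hj)]
    exact Circle.exp_pi_ne_one⟩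

theorem Circle.two_mul_re_eq_add_inv (z : Circle) : 2 * ((z : ℂ).re : ℂ) = z + (z : ℂ)⁻¹ := by
  rw [← Complex.ofReal_ofNat, ← Complex.ofReal_mul, ← Circle.coe_inv, Circle.coe_inv_eq_conj,
    Complex.add_conj]

noncomputable def torusChar (j k l : ℤ) : Circle × Circle × Circle →* ℂ where
  toFun u := (u.1 : ℂ) ^ j * (u.2.1 : ℂ) ^ k * (u.2.2 : ℂ) ^ l
  map_one' := by simp
  map_mul' u v := by
    simp only [Prod.fst_mul, Prod.snd_mul, Circle.coe_mul, mul_zpow]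
    ring

theorem continuous_torusChar (j k l : ℤ) : Continuous (torusChar j k l) := by
  show Continuous fun u : Circle × Circle × Circle =>
    (u.1 : ℂ) ^ j * (u.2.1 : ℂ) ^ k * (u.2.2 : ℂ) ^ l
  fun_prop (disch := simp)

theorem exists_torusChar_ne_one {j k l : ℤ} (h : ¬(j = 0 ∧ k = 0 ∧ l = 0)) :
    ∃ u, torusChar j k l u ≠ 1 := by
  have hcoe {m : ℤ} {z : Circle} (hz : z ^ m ≠ 1) : (z : ℂ) ^ m ≠ 1 := by
    rwa [← Circle.coe_zpow, Ne, Circle.coe_eq_one]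
  by_cases hj : j = 0
  · by_cases hk : k = 0
    · obtain ⟨z, hz⟩ := Circle.exists_zpow_ne_one (show l ≠ 0 by tauto)
      exact ⟨(1, 1, z), by simpa [torusChar, hj, hk] using hcoe hz⟩
    · obtain ⟨z, hz⟩ := Circle.exists_zpow_ne_one hk
      exact ⟨(1, z, 1), by simpa [torusChar, hj] using hcoe hz⟩
  · obtain ⟨z, hz⟩ := Circle.exists_zpow_ne_one hj
    exact ⟨(z, 1, 1), by simpa [torusChar] using hcoe hz⟩

section Torus

variable [MeasurableSpace (Circle × Circle × Circle)] [BorelSpace (Circle × Circle × Circle)]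
  (μ : Measure (Circle × Circle × Circle)) [μ.IsMulLeftInvariant] [IsProbabilityMeasure μ]

theorem integral_torusChar (j k l : ℤ) :
    ∫ u, torusChar j k l u ∂μ
      = (if j = 0 then 1 else 0) * (if k = 0 then 1 else 0) * (if l = 0 then 1 else 0) := by
  by_cases h : j = 0 ∧ k = 0 ∧ l = 0
  · obtain ⟨rfl, rfl, rfl⟩ := h
    simp [torusChar]
  · obtain ⟨u, hu⟩ := exists_torusChar_ne_one h
    rw [integral_monoidHom_eq_zero μ _ hu]
    split_ifs <;> simp_all

theorem integral_re_pow_mul_re_pow_mul_re_pow (p q r : ℕ) :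
    ∫ u, (2 * (u.1 : ℂ).re) ^ p * (2 * (u.2.1 : ℂ).re) ^ q * (2 * (u.2.2 : ℂ).re) ^ r ∂μ
      = circleTraceMoment p * circleTraceMoment q * circleTraceMoment r := by
  have hexpand (u : Circle × Circle × Circle) :
      (((2 * (u.1 : ℂ).re) ^ p * (2 * (u.2.1 : ℂ).re) ^ q * (2 * (u.2.2 : ℂ).re) ^ r : ℝ) : ℂ)
        = ∑ x ∈ range (p + 1) ×ˢ range (q + 1) ×ˢ range (r + 1),
            (p.choose x.1 * q.choose x.2.1 * r.choose x.2.2 : ℂ)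
              * torusChar (2 * (x.1 : ℤ) - p) (2 * (x.2.1 : ℤ) - q) (2 * (x.2.2 : ℤ) - r) u := by
    push_cast [Circle.two_mul_re_eq_add_inv]
    rw [add_inv_pow_eq_sum_zpow u.1.coe_ne_zero, add_inv_pow_eq_sum_zpow u.2.1.coe_ne_zero,
      add_inv_pow_eq_sum_zpow u.2.2.coe_ne_zero, sum_mul_sum_mul_sum]
    refine sum_congr rfl fun x _ => ?_
    simp only [torusChar, MonoidHom.coe_mk, OneHom.coe_mk]
    ring
  apply Complex.ofReal_injective
  have hintegrable (j k l : ℤ) : Integrable (torusChar j k l) μ :=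
    (continuous_torusChar j k l).integrable_of_hasCompactSupport (.of_compactSpace _)
  rw [← integral_complex_ofReal]
  simp_rw [hexpand]
  rw [integral_finsetSum _ fun x _ => (hintegrable _ _ _).const_mul _]
  simp_rw [integral_const_mul, integral_torusChar]
  push_cast
  rw [← sum_choose_mul_ite_eq_circleTraceMoment p, ← sum_choose_mul_ite_eq_circleTraceMoment q,
    ← sum_choose_mul_ite_eq_circleTraceMoment r, sum_mul_sum_mul_sum]
  refine sum_congr rfl fun x _ => ?_
  ring

theorem integral_thirdTrace_pow (n : ℕ) :
    ∫ u, (2 * (2 * (u.1 : ℂ).re) + 2 * (2 * (u.2.1 : ℂ).re) + 2 * (2 * (u.2.2 : ℂ).re)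
        + 2 * (u.1 : ℂ).re * (2 * (u.2.1 : ℂ).re) * (2 * (u.2.2 : ℂ).re)) ^ n ∂μ
      = thirdTraceMoment n := by
  have hintegrable (p q r : ℕ) : Integrable (fun u : Circle × Circle × Circle =>
      (2 * (u.1 : ℂ).re) ^ p * (2 * (u.2.1 : ℂ).re) ^ q * (2 * (u.2.2 : ℂ).re) ^ r) μ :=
    Continuous.integrable_of_hasCompactSupport (by fun_prop) (.of_compactSpace _)
  simp_rw [thirdTrace_pow_eq_sum]
  rw [integral_finsetSum _ fun k _ => ((hintegrable _ _ _).const_mul _).const_mul _]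
  simp_rw [integral_const_mul, integral_re_pow_mul_re_pow_mul_re_pow, thirdTraceMoment]
  push_cast
  refine sum_congr rfl fun k _ => ?_
  ring

end Torus

/-- Moments of the third trace `a₃ = 2α₁ + 2α₂ + 2α₃ + α₁α₂α₃`
(with `αᵢ = uᵢ + ūᵢ = 2 Re uᵢ`) with respect to the Haar probability measure on
`U(1)³`: `∫ a₃ⁿ dμ = ∑_{a+b+c+d=n} n!/(a!b!c!d!) · 2^{a+b+c} · M(a+d)M(b+d)M(c+d)`,
where `M(k) = C(k, k/2)` for `k` even and `0` for `k` odd; the values for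
`n = 0,…,6` are `1, 0, 32, 0, 4920, 0, 1109120`. -/
theorem third_trace_moments
    [MeasurableSpace (Circle × Circle × Circle)]
    [BorelSpace (Circle × Circle × Circle)]
    (μ : Measure (Circle × Circle × Circle))
    [μ.IsHaarMeasure] [IsProbabilityMeasure μ] :
    let M : ℕ → ℝ := fun k => if Even k then (k.choose (k / 2) : ℝ) else 0
    let α₁ : Circle × Circle × Circle → ℝ := fun u => 2 * (u.1 : ℂ).re
    let α₂ : Circle × Circle × Circle → ℝ := fun u => 2 * (u.2.1 : ℂ).re
    let α₃ : Circle × Circle × Circle → ℝ := fun u => 2 * (u.2.2 : ℂ).re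
    let a₃ : Circle × Circle × Circle → ℝ :=
      fun u => 2 * α₁ u + 2 * α₂ u + 2 * α₃ u + α₁ u * α₂ u * α₃ u
    (∀ n : ℕ,
      ∫ u, (a₃ u) ^ n ∂μ
        = ∑ a ∈ Finset.range (n + 1), ∑ b ∈ Finset.range (n + 1),
            ∑ c ∈ Finset.range (n + 1), ∑ d ∈ Finset.range (n + 1),
            if a + b + c + d = n then
              (n.factorial : ℝ)
                  / ((a.factorial : ℝ) * b.factorial * c.factorial * d.factorial)
                * 2 ^ (a + b + c) * M (a + d) * M (b + d) * M (c + d)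
            else 0) ∧
    (∫ u, (a₃ u) ^ 0 ∂μ) = 1 ∧ (∫ u, (a₃ u) ^ 1 ∂μ) = 0 ∧
    (∫ u, (a₃ u) ^ 2 ∂μ) = 32 ∧ (∫ u, (a₃ u) ^ 3 ∂μ) = 0 ∧
    (∫ u, (a₃ u) ^ 4 ∂μ) = 4920 ∧ (∫ u, (a₃ u) ^ 5 ∂μ) = 0 ∧
    (∫ u, (a₃ u) ^ 6 ∂μ) = 1109120 := by
  intro M α₁ α₂ α₃ a₃
  have hmoment (n : ℕ) : ∫ u, a₃ u ^ n ∂μ = thirdTraceMoment n := integral_thirdTrace_pow μ n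
  have hM (k : ℕ) : M k = circleTraceMoment k := by
    simp only [M, circleTraceMoment]
    split_ifs <;> simp
  refine ⟨fun n => ?_, ?_, ?_, ?_, ?_, ?_, ?_, ?_⟩
  · simp only [hmoment, cast_thirdTraceMoment, hM]
  all_goals rw [hmoment]; exact_mod_cast (show thirdTraceMoment _ = _ by decide +kernel)
end
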